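/- arXiv:2012.08144 — 3 statements merged into one kernel-verified Lean document; each statement's English description precedes it below -/
import Mathlib

section
/- Let 0 ≤ p, q, r ≤ N and 0 ≤ j ≤ N. If p + q > j, then f_{pqr}^{(j)} = − Σ_{((i_1,…,i_l),(d_1,…,d_l)) ∈ Λ_r^j} ((n+1)!/(d_1!⋯d_l!)) · z_{i_1}^{d_1} ⋯ z_{i_l}^{d_l} (the empty sum being 0). -/
/-
Every monomial of `x(t) y(t)` has `t`-degree at least `p + q > j`, so only `-z(t)^(n+1)`
contributes to the coefficient of `t^j`. Expanding `z(t)^(n+1)` by the multinomial theorem, a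
multiplicity vector `d` contributes to `t^j` exactly when `Σ i d_i = j`; since every index in
its support satisfies `i ≤ i d_i ≤ j ≤ N`, these vectors are exactly the elements of `Λ_r^j`.
-/

noncomputable section

open MvPolynomial

/-- `R N = ℂ[x_0,…,x_N, y_0,…,y_N, z_0,…,z_N]`. -/
abbrev R (N : ℕ) : Type := MvPolynomial (Fin 3 × Fin (N + 1)) ℂ

/-- the variable `x_i` (for `i ≤ N`). -/
def Xv (N i : ℕ) : R N := if h : i < N + 1 then X (0, ⟨i, h⟩) else 0
/-- the variable `y_i` (for `i ≤ N`). -/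
def Yv (N i : ℕ) : R N := if h : i < N + 1 then X (1, ⟨i, h⟩) else 0
/-- the variable `z_i` (for `i ≤ N`). -/
def Zv (N i : ℕ) : R N := if h : i < N + 1 then X (2, ⟨i, h⟩) else 0

/-- `Σ_{i=p}^N x_i t^i`. -/
def xSer (N p : ℕ) : Polynomial (R N) :=
  ∑ i ∈ Finset.Icc p N, Polynomial.C (Xv N i) * Polynomial.X ^ i
/-- `Σ_{i=q}^N y_i t^i`. -/
def ySer (N q : ℕ) : Polynomial (R N) :=
  ∑ i ∈ Finset.Icc q N, Polynomial.C (Yv N i) * Polynomial.X ^ i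
/-- `Σ_{i=r}^N z_i t^i`. -/
def zSer (N r : ℕ) : Polynomial (R N) :=
  ∑ i ∈ Finset.Icc r N, Polynomial.C (Zv N i) * Polynomial.X ^ i

/-- `f_{pqr}^{(j)}`: the coefficient of `t^j` in
`f(Σ_{i=p}^N x_i t^i, Σ_{i=q}^N y_i t^i, Σ_{i=r}^N z_i t^i)` where `f = xy - z^{n+1}`. -/
def fpqr (N n p q r j : ℕ) : R N :=
  (xSer N p * ySer N q - zSer N r ^ (n + 1)).coeff j

/-- `Λ_{pq}^j = {(l₁,l₂) ∈ ℤ_{≥0}² : l₁ ≥ p, l₂ ≥ q, l₁+l₂ = j}`. -/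
def LamPQ (p q j : ℕ) : Finset (ℕ × ℕ) :=
  (Finset.HasAntidiagonal.antidiagonal j).filter fun l => p ≤ l.1 ∧ q ≤ l.2

/-- `Λ_r^j`, encoded as the set of finitely supported functions `d : ℕ →₀ ℕ`
(recording the multiplicity `d_k` of each index `i_k` of the strictly increasing
sequence `r ≤ i_1 < ⋯ < i_l ≤ j`, so `l ≥ 1` and `d > 0` on the support) with
`Σ d_i = n+1` and `Σ i·d_i = j`. -/
def LamR (n r j : ℕ) : Finset (ℕ →₀ ℕ) :=
  (Finset.finsuppAntidiag (Finset.Icc r j) (n + 1)).filter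
    fun d => ∑ i ∈ d.support, i * d i = j

/-- the monomial term `((n+1)!/(d_1!⋯d_l!)) · z_{i_1}^{d_1} ⋯ z_{i_l}^{d_l}`. -/
def zTerm (N : ℕ) (d : ℕ →₀ ℕ) : R N :=
  (Nat.multinomial d.support d : R N) * ∏ i ∈ d.support, Zv N i ^ d i

namespace Finset

variable {ι A : Type*} [DecidableEq ι] [CommSemiring A]

lemma sum_finsuppAntidiag_eq_sum_piAntidiag {M : Type*} [AddCommMonoid M] (s : Finset ι)
    (m : ℕ) (g : (ι → ℕ) → M) :
    ∑ d ∈ s.finsuppAntidiag m, g d = ∑ k ∈ s.piAntidiag m, g k := by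
  rw [finsuppAntidiag, sum_map, ← sum_attach (piAntidiag s m)]
  rfl

lemma sum_pow_eq_sum_finsuppAntidiag (s : Finset ι) (f : ι → A) (m : ℕ) :
    (∑ i ∈ s, f i) ^ m =
      ∑ d ∈ s.finsuppAntidiag m,
        (Nat.multinomial d.support d : A) * ∏ i ∈ d.support, f i ^ d i := by
  rw [sum_pow_eq_sum_piAntidiag, ← sum_finsuppAntidiag_eq_sum_piAntidiag _ _
    fun k => (Nat.multinomial s k : A) * ∏ i ∈ s, f i ^ k i]
  refine sum_congr rfl fun d hd => ?_
  have hsupp : d.support ⊆ s := (mem_finsuppAntidiag.1 hd).2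
  have hzero : ∀ i ∈ s, i ∉ d.support → d i = 0 :=
    fun i _ hi => Finsupp.notMem_support_iff.1 hi
  rw [Nat.multinomial_congr_of_sdiff hsupp
      (fun i hi => hzero i (mem_sdiff.1 hi).1 (mem_sdiff.1 hi).2) fun _ _ => rfl,
    prod_subset hsupp fun i hi hi' => by rw [hzero i hi hi', pow_zero]]

end Finset

namespace Polynomial

variable {A : Type*} [CommSemiring A]

lemma X_pow_dvd_sum_Icc_C_mul_X_pow (a : ℕ → A) (p N : ℕ) :
    X ^ p ∣ ∑ i ∈ Finset.Icc p N, C (a i) * X ^ i :=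
  Finset.dvd_sum fun _ hi => Dvd.dvd.mul_left (pow_dvd_pow X (Finset.mem_Icc.1 hi).1) _

lemma coeff_sum_C_mul_X_pow_pow (s : Finset ℕ) (a : ℕ → A) (m j : ℕ) :
    ((∑ i ∈ s, C (a i) * X ^ i) ^ m).coeff j =
      ∑ d ∈ (s.finsuppAntidiag m).filter (fun d => ∑ i ∈ d.support, i * d i = j),
        (Nat.multinomial d.support d : A) * ∏ i ∈ d.support, a i ^ d i := by
  rw [Finset.sum_pow_eq_sum_finsuppAntidiag, finsetSum_coeff, Finset.sum_filter]
  refine Finset.sum_congr rfl fun d _ => ?_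
  have hmonomial : ∏ i ∈ d.support, (C (a i) * X ^ i) ^ d i =
      C (∏ i ∈ d.support, a i ^ d i) * X ^ (∑ i ∈ d.support, i * d i) := by
    simp only [mul_pow, Finset.prod_mul_distrib, map_prod, map_pow, ← pow_mul,
      Finset.prod_pow_eq_pow_sum]
  rw [hmonomial, ← mul_assoc, ← C_eq_natCast, ← C_mul, coeff_C_mul_X_pow]
  exact if_congr eq_comm rfl rfl

end Polynomial

lemma xSer_mul_ySer_coeff_eq_zero {N p q j : ℕ} (h : j < p + q) :
    (xSer N p * ySer N q).coeff j = 0 :=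
  Polynomial.X_pow_dvd_iff.1 (pow_add (Polynomial.X : Polynomial (R N)) p q ▸ mul_dvd_mul
    (Polynomial.X_pow_dvd_sum_Icc_C_mul_X_pow _ p N)
    (Polynomial.X_pow_dvd_sum_Icc_C_mul_X_pow _ q N)) j h

lemma le_sum_mul_of_mem_support {d : ℕ →₀ ℕ} {i : ℕ} (hi : i ∈ d.support) :
    i ≤ ∑ k ∈ d.support, k * d k :=
  (Nat.le_mul_of_pos_right i (Nat.pos_of_ne_zero (Finsupp.mem_support_iff.1 hi))).trans
    (Finset.single_le_sum (f := fun k => k * d k) (fun _ _ => Nat.zero_le _) hi)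

lemma filter_finsuppAntidiag_Icc_eq_LamR {n N r j : ℕ} (hj : j ≤ N) :
    ((Finset.Icc r N).finsuppAntidiag (n + 1)).filter (fun d => ∑ i ∈ d.support, i * d i = j) =
      LamR n r j := by
  ext d
  simp only [LamR, Finset.mem_filter, Finset.mem_finsuppAntidiag', and_congr_left_iff]
  intro hweight
  refine and_congr_right fun _ =>
    ⟨fun hsupp i hi => ?_, fun hsupp => hsupp.trans (Finset.Icc_subset_Icc_right hj)⟩
  exact Finset.mem_Icc.2
    ⟨(Finset.mem_Icc.1 (hsupp hi)).1, hweight ▸ le_sum_mul_of_mem_support hi⟩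

lemma zSer_pow_coeff {n N r j : ℕ} (hj : j ≤ N) :
    (zSer N r ^ (n + 1)).coeff j = ∑ d ∈ LamR n r j, zTerm N d := by
  rw [zSer, Polynomial.coeff_sum_C_mul_X_pow_pow, filter_finsuppAntidiag_Icc_eq_LamR hj]
  rfl

theorem stmt2_general (n N : ℕ) (p q r j : ℕ)
    (hj : j ≤ N) (h : p + q > j) :
    fpqr N n p q r j = -∑ d ∈ LamR n r j, zTerm N d := by
  rw [fpqr, Polynomial.coeff_sub, xSer_mul_ySer_coeff_eq_zero h, zSer_pow_coeff hj, zero_sub]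

theorem stmt2 (n N : ℕ) (hn : 1 ≤ n) (p q r j : ℕ)
    (hp : p ≤ N) (hq : q ≤ N) (hr : r ≤ N) (hj : j ≤ N) (h : p + q > j) :
    fpqr N n p q r j = -∑ d ∈ LamR n r j, zTerm N d :=
  stmt2_general n N p q r j hj h

end
end

section
/- Let m ≥ n and 1 ≤ l ≤ n. Then I_m^l = L_{l,n+1−l,1} + G_m^l, where G_m^l = ⟨g_{l,1}^{(0)},…,g_{l,1}^{(m−n−1)}⟩ (and G_n^l = 0). In particular, if m = n then I_n^l = L_{l,n+1−l,1} = ⟨x_0,…,x_{l−1}, y_0,…,y_{n−l}, z_0⟩. -/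
noncomputable section

open MvPolynomial

/-- The ideal `L_{pqr} = ⟨x_0,…,x_{p−1}, y_0,…,y_{q−1}, z_0,…,z_{r−1}⟩`. -/
def Lpqr (N p q r : ℕ) : Ideal (R N) :=
  Ideal.span ((Xv N '' Set.Iio p) ∪ (Yv N '' Set.Iio q) ∪ (Zv N '' Set.Iio r))

/-- The substitution `x_i ↦ x_{l+i}`, `y_i ↦ y_{e(n+1)−l+i}`, `z_i ↦ z_{e+i}`. -/
def shiftSub (N n l e : ℕ) : Fin 3 × Fin (N + 1) → R N := fun v =>
  if v.1 = 0 then Xv N (l + (v.2 : ℕ))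
  else if v.1 = 1 then Yv N (e * (n + 1) - l + (v.2 : ℕ))
  else Zv N (e + (v.2 : ℕ))

/-- `g_{l,e}^{(j)}`: obtained from `f^{(j)} = f_{000}^{(j)}` by the substitution
`x_i ↦ x_{l+i}`, `y_i ↦ y_{e(n+1)−l+i}`, `z_i ↦ z_{e+i}`. -/
def gle (N n l e j : ℕ) : R N := aeval (shiftSub N n l e) (fpqr N n 0 0 0 j)

/-- The ideal `⟨f^{(0)},…,f^{(m)}⟩` of `R_m`. -/
def Fideal (m n : ℕ) : Ideal (R m) :=
  Ideal.span {g | ∃ j ≤ m, g = fpqr m n 0 0 0 j}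

/-- `I_m^l = L_{l,n+1−l,1} + ⟨f^{(0)},…,f^{(m)}⟩`. -/
def Iml (m n l : ℕ) : Ideal (R m) := Lpqr m l (n + 1 - l) 1 ⊔ Fideal m n

/-- `G_m^l = ⟨g_{l,1}^{(0)},…,g_{l,1}^{(m−n−1)}⟩` (the zero ideal when `m = n`). -/
def Gml (m n l : ℕ) : Ideal (R m) :=
  Ideal.span {g | ∃ j < m - n, g = gle m n l 1 j}



lemma Xv_zero {N i : ℕ} (h : N < i) : Xv N i = 0 := by rw [Xv, dif_neg (by omega)]
lemma Yv_zero {N i : ℕ} (h : N < i) : Yv N i = 0 := by rw [Yv, dif_neg (by omega)]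
lemma Zv_zero {N i : ℕ} (h : N < i) : Zv N i = 0 := by rw [Zv, dif_neg (by omega)]

lemma coeff_ser (N p j : ℕ) (v : ℕ → R N) :
    (∑ i ∈ Finset.Icc p N, Polynomial.C (v i) * Polynomial.X ^ i).coeff j
      = if p ≤ j ∧ j ≤ N then v j else 0 := by
  simp_rw [Polynomial.C_mul_X_pow_eq_monomial, Polynomial.finset_sum_coeff,
    Polynomial.coeff_monomial]
  rw [Finset.sum_ite_eq' (Finset.Icc p N) j v]
  simp [Finset.mem_Icc]

lemma sh_eq (N p : ℕ) (v : ℕ → R N) (hv : ∀ i, N < i → v i = 0) :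
    (∑ i ∈ Finset.Icc p N, Polynomial.C (v i) * Polynomial.X ^ i)
      = (∑ i ∈ Finset.Icc 0 N, Polynomial.C (v (p + i)) * Polynomial.X ^ i) *
        Polynomial.X ^ p := by
  apply Polynomial.ext; intro j
  rw [coeff_ser, Polynomial.coeff_mul_X_pow', coeff_ser]
  by_cases h1 : p ≤ j
  · rw [if_pos h1]
    by_cases h2 : j ≤ N
    · rw [if_pos ⟨h1, h2⟩, if_pos ⟨Nat.zero_le _, by omega⟩, Nat.add_sub_cancel' h1]
    · rw [if_neg (by omega)]
      by_cases h3 : j - p ≤ N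
      · rw [if_pos ⟨Nat.zero_le _, h3⟩, Nat.add_sub_cancel' h1, hv j (by omega)]
      · rw [if_neg (by omega)]
  · rw [if_neg h1, if_neg (by omega)]


lemma Xv_mem {N p q r i : ℕ} (h : i < p) : Xv N i ∈ Lpqr N p q r :=
  Ideal.subset_span (Or.inl (Or.inl ⟨i, h, rfl⟩))
lemma Yv_mem {N p q r i : ℕ} (h : i < q) : Yv N i ∈ Lpqr N p q r :=
  Ideal.subset_span (Or.inl (Or.inr ⟨i, h, rfl⟩))
lemma Zv_mem {N p q r i : ℕ} (h : i < r) : Zv N i ∈ Lpqr N p q r :=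
  Ideal.subset_span (Or.inr ⟨i, h, rfl⟩)

lemma ser_sub_mem (N p : ℕ) (I : Ideal (R N)) (v : ℕ → R N) (hp : ∀ i, i < p → v i ∈ I) :
    (∑ i ∈ Finset.Icc 0 N, Polynomial.C (v i) * Polynomial.X ^ i)
      - (∑ i ∈ Finset.Icc p N, Polynomial.C (v i) * Polynomial.X ^ i)
      ∈ Ideal.map (Polynomial.C : R N →+* Polynomial (R N)) I := by
  rw [Ideal.mem_map_C_iff]
  intro k
  rw [Polynomial.coeff_sub, coeff_ser, coeff_ser]
  by_cases h1 : k ≤ N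
  · by_cases h2 : p ≤ k
    · rw [if_pos ⟨Nat.zero_le _, h1⟩, if_pos ⟨h2, h1⟩, sub_self]; exact Ideal.zero_mem _
    · rw [if_pos ⟨Nat.zero_le _, h1⟩, if_neg (by omega), sub_zero]; exact hp k (by omega)
  · rw [if_neg (by omega), if_neg (by omega), sub_zero]; exact Ideal.zero_mem _

lemma fdiff_mem (N n p q r j : ℕ) :
    fpqr N n 0 0 0 j - fpqr N n p q r j ∈ Lpqr N p q r := by
  set L := Lpqr N p q r with hL
  set M := Ideal.map (Polynomial.C : R N →+* Polynomial (R N)) L with hM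
  have hx : xSer N 0 - xSer N p ∈ M :=
    ser_sub_mem N p L (Xv N) (fun i hi => Xv_mem hi)
  have hy : ySer N 0 - ySer N q ∈ M :=
    ser_sub_mem N q L (Yv N) (fun i hi => Yv_mem hi)
  have hz : zSer N 0 - zSer N r ∈ M :=
    ser_sub_mem N r L (Zv N) (fun i hi => Zv_mem hi)
  have hzp : zSer N 0 ^ (n + 1) - zSer N r ^ (n + 1) ∈ M := by
    obtain ⟨c, hc⟩ := sub_dvd_pow_sub_pow (zSer N 0) (zSer N r) (n + 1)
    rw [hc]; exact Ideal.mul_mem_right _ _ hz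
  have key : (xSer N 0 * ySer N 0 - zSer N 0 ^ (n + 1))
      - (xSer N p * ySer N q - zSer N r ^ (n + 1)) ∈ M := by
    have hrw : (xSer N 0 * ySer N 0 - zSer N 0 ^ (n + 1))
        - (xSer N p * ySer N q - zSer N r ^ (n + 1))
        = (xSer N 0 - xSer N p) * ySer N 0 + xSer N p * (ySer N 0 - ySer N q)
          - (zSer N 0 ^ (n + 1) - zSer N r ^ (n + 1)) := by ring
    rw [hrw]
    exact Ideal.sub_mem _ (Ideal.add_mem _ (Ideal.mul_mem_right _ _ hx)
      (Ideal.mul_mem_left _ _ hy)) hzp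
  have := Ideal.mem_map_C_iff.mp key j
  simpa only [fpqr, Polynomial.coeff_sub] using this

/-- the core polynomial whose coefficients are the `g`'s -/
def wpoly (m n l : ℕ) : Polynomial (R m) :=
  (∑ i ∈ Finset.Icc 0 m, Polynomial.C (Xv m (l + i)) * Polynomial.X ^ i) *
  (∑ i ∈ Finset.Icc 0 m, Polynomial.C (Yv m (n + 1 - l + i)) * Polynomial.X ^ i) -
  (∑ i ∈ Finset.Icc 0 m, Polynomial.C (Zv m (1 + i)) * Polynomial.X ^ i) ^ (n + 1)

lemma fpqr_shift (m n l j : ℕ) (hl : l ≤ n + 1) :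
    fpqr m n l (n + 1 - l) 1 j = (wpoly m n l * Polynomial.X ^ (n + 1)).coeff j := by
  have hx := sh_eq m l (Xv m) (fun i hi => Xv_zero hi)
  have hy := sh_eq m (n + 1 - l) (Yv m) (fun i hi => Yv_zero hi)
  have hz := sh_eq m 1 (Zv m) (fun i hi => Zv_zero hi)
  rw [fpqr, xSer, ySer, zSer, hx, hy, hz]
  congr 1
  set xA := ∑ i ∈ Finset.Icc 0 m, Polynomial.C (Xv m (l + i)) * Polynomial.X ^ i with hxA
  set yA := ∑ i ∈ Finset.Icc 0 m, Polynomial.C (Yv m (n + 1 - l + i)) * Polynomial.X ^ i with hyA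
  set zA := ∑ i ∈ Finset.Icc 0 m, Polynomial.C (Zv m (1 + i)) * Polynomial.X ^ i with hzA
  have h2 : (Polynomial.X : Polynomial (R m)) ^ l * Polynomial.X ^ (n + 1 - l)
      = Polynomial.X ^ (n + 1) := by
    rw [← pow_add]; congr 1; omega
  have h4 : xA * Polynomial.X ^ l * (yA * Polynomial.X ^ (n + 1 - l))
      = xA * yA * Polynomial.X ^ (n + 1) := by
    calc xA * Polynomial.X ^ l * (yA * Polynomial.X ^ (n + 1 - l))
        = xA * yA * (Polynomial.X ^ l * Polynomial.X ^ (n + 1 - l)) := by ring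
      _ = xA * yA * Polynomial.X ^ (n + 1) := by rw [h2]
  rw [h4, wpoly, sub_mul, mul_pow, ← pow_mul, one_mul, ← hxA, ← hyA, ← hzA]


lemma aeval_shift_Xv (N n l e i : ℕ) (hi : i ≤ N) :
    aeval (shiftSub N n l e) (Xv N i) = Xv N (l + i) := by
  rw [Xv, dif_pos (by omega), aeval_X]
  simp [shiftSub]

lemma aeval_shift_Yv (N n l e i : ℕ) (hi : i ≤ N) :
    aeval (shiftSub N n l e) (Yv N i) = Yv N (e * (n + 1) - l + i) := by
  rw [Yv, dif_pos (by omega), aeval_X]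
  simp [shiftSub]

lemma aeval_shift_Zv (N n l e i : ℕ) (hi : i ≤ N) :
    aeval (shiftSub N n l e) (Zv N i) = Zv N (e + i) := by
  rw [Zv, dif_pos (by omega), aeval_X]
  simp [shiftSub]

lemma gle_eq (m n l k : ℕ) : gle m n l 1 k = (wpoly m n l).coeff k := by
  set φ := (aeval (shiftSub m n l 1) : MvPolynomial (Fin 3 × Fin (m + 1)) ℂ →ₐ[ℂ] R m).toRingHom
    with hφ
  have mapser : ∀ (v w : ℕ → R m), (∀ i, i ≤ m → φ (v i) = w i) →
      (∑ i ∈ Finset.Icc 0 m, Polynomial.C (v i) * Polynomial.X ^ i).map φ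
        = ∑ i ∈ Finset.Icc 0 m, Polynomial.C (w i) * Polynomial.X ^ i := by
    intro v w h
    rw [Polynomial.map_sum]
    apply Finset.sum_congr rfl
    intro i hi
    rw [Polynomial.map_mul, Polynomial.map_C, Polynomial.map_pow, Polynomial.map_X,
      h i (Finset.mem_Icc.mp hi).2]
  show φ (fpqr m n 0 0 0 k) = _
  rw [fpqr, ← Polynomial.coeff_map]
  congr 1
  rw [Polynomial.map_sub, Polynomial.map_mul, Polynomial.map_pow, xSer, ySer, zSer, wpoly]
  rw [mapser (Xv m) (fun i => Xv m (l + i)) (fun i hi => aeval_shift_Xv m n l 1 i hi),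
    mapser (Yv m) (fun i => Yv m (n + 1 - l + i))
      (fun i hi => by
        have h := aeval_shift_Yv m n l 1 i hi
        rw [one_mul] at h
        exact h),
    mapser (Zv m) (fun i => Zv m (1 + i)) (fun i hi => aeval_shift_Zv m n l 1 i hi)]

lemma fpqr_low (m n l j : ℕ) (hl : l ≤ n + 1) (hj : j ≤ n) :
    fpqr m n l (n + 1 - l) 1 j = 0 := by
  rw [fpqr_shift m n l j hl, Polynomial.coeff_mul_X_pow', if_neg (by omega)]

lemma fpqr_high (m n l k : ℕ) (hl : l ≤ n + 1) :
    fpqr m n l (n + 1 - l) 1 (n + 1 + k) = gle m n l 1 k := by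
  rw [fpqr_shift _ _ _ _ hl, Polynomial.coeff_mul_X_pow', if_pos (by omega), gle_eq]
  congr 1
  omega



/- STATEMENT 6: for `m ≥ n` and `1 ≤ l ≤ n`, `I_m^l = L_{l,n+1−l,1} + G_m^l`;
in particular, if `m = n` then `I_n^l = L_{l,n+1−l,1}`. -/
theorem stmt6 (n m : ℕ) (hn : 1 ≤ n) (hm : n ≤ m) (l : ℕ) (hl1 : 1 ≤ l) (hln : l ≤ n) :
    Iml m n l = Lpqr m l (n + 1 - l) 1 ⊔ Gml m n l ∧
    (m = n → Iml m n l = Lpqr m l (n + 1 - l) 1) := by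
  have hl' : l ≤ n + 1 := by omega
  have main : Iml m n l = Lpqr m l (n + 1 - l) 1 ⊔ Gml m n l := by
    rw [Iml]
    apply le_antisymm
    · apply sup_le le_sup_left
      rw [Fideal, Ideal.span_le]
      rintro g ⟨j, hj, rfl⟩
      have hd := fdiff_mem m n l (n + 1 - l) 1 j
      have hsplit : fpqr m n 0 0 0 j
          = (fpqr m n 0 0 0 j - fpqr m n l (n + 1 - l) 1 j) + fpqr m n l (n + 1 - l) 1 j := by
        ring
      rw [SetLike.mem_coe, hsplit]
      apply Ideal.add_mem
      · exact Ideal.mem_sup_left hd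
      · by_cases hjn : j ≤ n
        · rw [fpqr_low m n l j hl' hjn]; exact Ideal.zero_mem _
        · have hk : j = n + 1 + (j - (n + 1)) := by omega
          rw [hk, fpqr_high m n l _ hl']
          exact Ideal.mem_sup_right (Ideal.subset_span ⟨j - (n + 1), by omega, rfl⟩)
    · apply sup_le le_sup_left
      rw [Gml, Ideal.span_le]
      rintro g ⟨k, hk, rfl⟩
      have h1 : gle m n l 1 k = fpqr m n l (n + 1 - l) 1 (n + 1 + k) :=
        (fpqr_high m n l k hl').symm
      have hd := fdiff_mem m n l (n + 1 - l) 1 (n + 1 + k)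
      have h2 : gle m n l 1 k = fpqr m n 0 0 0 (n + 1 + k)
          - (fpqr m n 0 0 0 (n + 1 + k) - fpqr m n l (n + 1 - l) 1 (n + 1 + k)) := by
        rw [h1]; ring
      rw [SetLike.mem_coe, h2]
      apply Ideal.sub_mem
      · exact Ideal.mem_sup_right (Ideal.subset_span ⟨n + 1 + k, by omega, rfl⟩)
      · exact Ideal.mem_sup_left hd
  refine ⟨main, fun hmn => ?_⟩
  rw [main]
  have hG : Gml m n l = ⊥ := by
    have h0 : m - n = 0 := by omega
    have hset : {g : R m | ∃ j < m - n, g = gle m n l 1 j} = ∅ := by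
      ext g; simp [h0]
    rw [Gml, hset, Ideal.span_empty]
  rw [hG, sup_bot_eq]


end
end

section
/- Let m = n ≥ 2 and 1 ≤ i < j ≤ n. Then √(I_n^i + I_n^j) = L_{j,n+1−i,1} = ⟨x_0,…,x_{j−1}, y_0,…,y_{n−i}, z_0⟩; in particular this radical is a prime ideal, so the intersection Z_n^i ∩ Z_n^j of the corresponding zero loci is irreducible. -/
noncomputable section

open MvPolynomial

/-- Points of `ℂ^{3(m+1)}`. -/
abbrev Pt (m : ℕ) := Fin 3 × Fin (m + 1) → ℂ

/-- The zero locus in `ℂ^{3(m+1)}` of an ideal of `R_m`. -/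
def zl (m : ℕ) (I : Ideal (R m)) : Set (Pt m) := {x | ∀ g ∈ I, eval x g = 0}

/-- `Z_m^l ⊆ ℂ^{3(m+1)}`, the zero locus of `I_m^l`. -/
def Zml (m n l : ℕ) : Set (Pt m) := zl m (Iml m n l)

/-- A subset of `ℂ^{3(m+1)}` is irreducible with respect to the Zariski topology,
whose closed sets are exactly the zero loci of ideals of `R_m`. -/
def IsIrredSet (m : ℕ) (S : Set (Pt m)) : Prop :=
  S.Nonempty ∧
    ∀ I₁ I₂ : Ideal (R m), S ⊆ zl m I₁ ∪ zl m I₂ → S ⊆ zl m I₁ ∨ S ⊆ zl m I₂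

/-! Since `I_n^i + I_n^j` contains `x_a` for `a < j` and `y_b` for `b ≤ n - i`, it contains
every product `x_a y_b` with `a + b ≤ n`; since it contains `z_0`, it contains every coefficient
of `t^k`, `k ≤ n`, of `(Σ z_c t^c)^{n+1}`. Hence all the `f^{(k)}` are redundant and
`I_n^i + I_n^j = L_{j,n+1-i,1}`, an ideal generated by variables and therefore prime.
Its zero locus, a coordinate subspace, is irreducible by the Nullstellensatz. -/

section VariableIdeal

variable {σ A : Type*} [CommRing A] (s : Set σ)

open Classical in
def killVars : MvPolynomial σ A →ₐ[A] MvPolynomial σ A :=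
  aeval fun v => if v ∈ s then 0 else X v

lemma sub_killVars_mem_span (p : MvPolynomial σ A) :
    p - killVars s p ∈ Ideal.span (X '' s) := by
  induction p using MvPolynomial.induction_on with
  | C a => simp [killVars]
  | add p q hp hq =>
    rw [map_add, add_sub_add_comm]
    exact Ideal.add_mem _ hp hq
  | mul_X p v hp =>
    by_cases hv : v ∈ s
    · simpa [killVars, hv] using
        Ideal.mul_mem_left _ p (Ideal.subset_span (Set.mem_image_of_mem X hv))
    · simpa [killVars, hv, ← sub_mul] using Ideal.mul_mem_right (X v) _ hp

lemma ker_killVars :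
    RingHom.ker (killVars s : MvPolynomial σ A →ₐ[A] _) = Ideal.span (X '' s) := by
  refine le_antisymm (fun p hp => ?_) (Ideal.span_le.mpr ?_)
  · simpa [RingHom.mem_ker.mp hp] using sub_killVars_mem_span s p
  · rintro _ ⟨v, hv, rfl⟩
    simp [killVars, hv]

lemma isPrime_span_X_image [IsDomain A] :
    (Ideal.span (X '' s : Set (MvPolynomial σ A))).IsPrime := by
  rw [← ker_killVars]
  exact RingHom.ker_isPrime _

end VariableIdeal

lemma Lpqr_eq_span_X_image (N p q r : ℕ) :
    Lpqr N p q r = Ideal.span (X '' {v : Fin 3 × Fin (N + 1) |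
      v.1 = 0 ∧ (v.2 : ℕ) < p ∨ v.1 = 1 ∧ (v.2 : ℕ) < q ∨ v.1 = 2 ∧ (v.2 : ℕ) < r}) := by
  refine le_antisymm (Ideal.span_le.mpr ?_) (Ideal.span_le.mpr ?_)
  · rintro _ ((⟨a, ha, rfl⟩ | ⟨a, ha, rfl⟩) | ⟨a, ha, rfl⟩)
    all_goals
      simp only [Xv, Yv, Zv]
      split_ifs with h
      · exact Ideal.subset_span ⟨(_, ⟨a, h⟩), by simp_all, rfl⟩
      · exact zero_mem _
  · rintro _ ⟨⟨c, k⟩, hv, rfl⟩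
    rcases hv with ⟨rfl, hk⟩ | ⟨rfl, hk⟩ | ⟨rfl, hk⟩
    · exact Ideal.subset_span (Or.inl (Or.inl ⟨k, hk, by simp [Xv, k.isLt]⟩))
    · exact Ideal.subset_span (Or.inl (Or.inr ⟨k, hk, by simp [Yv, k.isLt]⟩))
    · exact Ideal.subset_span (Or.inr ⟨k, hk, by simp [Zv, k.isLt]⟩)

lemma isPrime_Lpqr (N p q r : ℕ) : (Lpqr N p q r).IsPrime := by
  rw [Lpqr_eq_span_X_image]
  exact isPrime_span_X_image _

lemma Lpqr_sup_Lpqr (N p q r p' q' r' : ℕ) :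
    Lpqr N p q r ⊔ Lpqr N p' q' r' = Lpqr N (max p p') (max q q') (max r r') := by
  simp only [Lpqr, ← Ideal.span_union]
  congr 1
  ext
  simp only [Set.mem_union, Set.mem_image, Set.mem_Iio, lt_max_iff, or_and_right, exists_or]
  simp only [or_assoc, or_left_comm]

lemma coeff_sum_Icc_C_mul_X_pow {A : Type*} [Semiring A] {N : ℕ} {v : ℕ → A}
    (hv : ∀ a, N < a → v a = 0) (a : ℕ) :
    (∑ i ∈ Finset.Icc 0 N, Polynomial.C (v i) * Polynomial.X ^ i).coeff a = v a := by
  simp only [Polynomial.finsetSum_coeff, Polynomial.coeff_C_mul_X_pow]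
  rw [Finset.sum_ite_eq]
  split_ifs with h
  · rfl
  · exact (hv a (by simpa using h)).symm

lemma xSer_coeff (N a : ℕ) : (xSer N 0).coeff a = Xv N a :=
  coeff_sum_Icc_C_mul_X_pow (fun _ h => dif_neg (by omega)) a

lemma ySer_coeff (N a : ℕ) : (ySer N 0).coeff a = Yv N a :=
  coeff_sum_Icc_C_mul_X_pow (fun _ h => dif_neg (by omega)) a

lemma zSer_coeff (N a : ℕ) : (zSer N 0).coeff a = Zv N a :=
  coeff_sum_Icc_C_mul_X_pow (fun _ h => dif_neg (by omega)) a

lemma fpqr_mem_Lpqr {N n p q k : ℕ} (hk : k < p + q) (hkn : k ≤ n) :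
    fpqr N n 0 0 0 k ∈ Lpqr N p q 1 := by
  set φ := Ideal.Quotient.mk (Lpqr N p q 1)
  have hx (a : ℕ) (ha : a < p) : φ (Xv N a) = 0 :=
    Ideal.Quotient.eq_zero_iff_mem.mpr (Ideal.subset_span (Or.inl (Or.inl ⟨a, ha, rfl⟩)))
  have hy (b : ℕ) (hb : b < q) : φ (Yv N b) = 0 :=
    Ideal.Quotient.eq_zero_iff_mem.mpr (Ideal.subset_span (Or.inl (Or.inr ⟨b, hb, rfl⟩)))
  have hz : φ (Zv N 0) = 0 :=
    Ideal.Quotient.eq_zero_iff_mem.mpr (Ideal.subset_span (Or.inr ⟨0, Nat.zero_lt_one, rfl⟩))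
  have hxy : ((xSer N 0).map φ * (ySer N 0).map φ).coeff k = 0 := by
    rw [Polynomial.coeff_mul]
    refine Finset.sum_eq_zero ?_
    rintro ⟨a, b⟩ hab
    rw [Finset.HasAntidiagonal.mem_antidiagonal] at hab
    simp only [Polynomial.coeff_map, xSer_coeff, ySer_coeff]
    rcases lt_or_ge a p with ha | ha
    · rw [hx a ha, zero_mul]
    · rw [hy b (by omega), mul_zero]
  have hzpow : ((zSer N 0).map φ ^ (n + 1)).coeff k = 0 := by
    have hX : Polynomial.X ∣ (zSer N 0).map φ := by
      rw [Polynomial.X_dvd_iff, Polynomial.coeff_map, zSer_coeff, hz]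
    have hXpow := pow_dvd_pow_of_dvd (α := Polynomial (R N ⧸ Lpqr N p q 1)) hX (n + 1)
    exact Polynomial.X_pow_dvd_iff.mp hXpow k (by omega)
  rw [← Ideal.Quotient.eq_zero_iff_mem, fpqr, ← Polynomial.coeff_map, Polynomial.map_sub,
    Polynomial.map_mul, Polynomial.map_pow, Polynomial.coeff_sub, hxy, hzpow, sub_zero]

lemma Fideal_le_Lpqr {m n p q : ℕ} (hmn : m ≤ n) (hm : m < p + q) :
    Fideal m n ≤ Lpqr m p q 1 := by
  rw [Fideal, Ideal.span_le]
  rintro _ ⟨k, hk, rfl⟩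
  exact fpqr_mem_Lpqr (by omega) (by omega)

lemma Iml_sup_Iml {n i j : ℕ} (hij : i < j) :
    Iml n n i ⊔ Iml n n j = Lpqr n j (n + 1 - i) 1 := by
  have hL : Lpqr n i (n + 1 - i) 1 ⊔ Lpqr n j (n + 1 - j) 1 = Lpqr n j (n + 1 - i) 1 := by
    rw [Lpqr_sup_Lpqr, max_eq_right hij.le, max_eq_left (by omega), max_self]
  rw [Iml, Iml, sup_sup_sup_comm, hL, sup_idem]
  exact sup_eq_left.mpr (Fideal_le_Lpqr le_rfl (by omega))

lemma zl_sup (m : ℕ) (I J : Ideal (R m)) : zl m (I ⊔ J) = zl m I ∩ zl m J := by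
  ext x
  refine ⟨fun hx => ⟨fun g hg => hx g (Ideal.mem_sup_left hg),
    fun g hg => hx g (Ideal.mem_sup_right hg)⟩, fun ⟨hI, hJ⟩ g hg => ?_⟩
  obtain ⟨a, ha, b, hb, rfl⟩ := Submodule.mem_sup.mp hg
  simp [hI a ha, hJ b hb]

lemma isIrredSet_zl_of_isPrime {m : ℕ} (P : Ideal (R m)) [hP : P.IsPrime] :
    IsIrredSet m (zl m P) := by
  -- the Nullstellensatz; `zl m P` unfolds to `zeroLocus ℂ P`
  have hV : vanishingIdeal ℂ (zl m P) = P := IsPrime.vanishingIdeal_zeroLocus P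
  refine ⟨Set.nonempty_iff_ne_empty.mpr fun h => hP.ne_top ?_, fun I₁ I₂ hsub => ?_⟩
  · rw [← hV, h, vanishingIdeal_empty]
  have hmul : I₁ * I₂ ≤ P := by
    rw [← hV, Ideal.mul_le]
    intro a ha b hb x hx
    rcases hsub hx with h | h
    · simp [h a ha]
    · simp [h b hb]
  rcases hP.mul_le.mp hmul with h | h
  · exact Or.inl fun x hx g hg => hx g (h hg)
  · exact Or.inr fun x hx g hg => hx g (h hg)

theorem stmt7_general (n : ℕ) (i j : ℕ) (hij : i < j) :
    (Iml n n i ⊔ Iml n n j).radical = Lpqr n j (n + 1 - i) 1 ∧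
    (Lpqr n j (n + 1 - i) 1).IsPrime ∧
    IsIrredSet n (Zml n n i ∩ Zml n n j) := by
  have hprime := isPrime_Lpqr n j (n + 1 - i) 1
  refine ⟨(Iml_sup_Iml hij).symm ▸ hprime.radical, hprime, ?_⟩
  rw [Zml, Zml, ← zl_sup, Iml_sup_Iml hij]
  exact isIrredSet_zl_of_isPrime _

theorem stmt7 (n : ℕ) (hn : 2 ≤ n) (i j : ℕ) (hi : 1 ≤ i) (hij : i < j) (hj : j ≤ n) :
    (Iml n n i ⊔ Iml n n j).radical = Lpqr n j (n + 1 - i) 1 ∧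
    (Lpqr n j (n + 1 - i) 1).IsPrime ∧
    IsIrredSet n (Zml n n i ∩ Zml n n j) :=
  stmt7_general n i j hij

end
end
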